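/- arXiv:2310.09857 — 10 statements merged into one kernel-verified Lean document; each statement's English description precedes it below -/
import Mathlib

section
/- Every finite digraph is ubiquitous. -/
/-- A copy of the digraph `H` in the digraph `D`: an injective arc-preserving map. -/
structure DCopy {V W : Type} (H : Digraph V) (D : Digraph W) where
  toFun : V → W
  inj : Function.Injective toFun
  adj : ∀ u v : V, H.Adj u v → D.Adj (toFun u) (toFun v)

/-- Two copies are vertex-disjoint if their images are disjoint. -/
def DCopy.VDisjoint {V W : Type} {H : Digraph V} {D : Digraph W}
    (c₁ c₂ : DCopy H D) : Prop :=
  ∀ u v : V, c₁.toFun u ≠ c₂.toFun v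

/-- `D` contains arbitrarily many pairwise vertex-disjoint copies of `H`. -/
def ManyDisjointCopies {V W : Type} (H : Digraph V) (D : Digraph W) : Prop :=
  ∀ k : ℕ, ∃ f : Fin k → DCopy H D, ∀ i j : Fin k, i ≠ j → (f i).VDisjoint (f j)

/-- `D` contains infinitely many pairwise vertex-disjoint copies of `H`. -/
def InfDisjointCopies {V W : Type} (H : Digraph V) (D : Digraph W) : Prop :=
  ∃ f : ℕ → DCopy H D, ∀ i j : ℕ, i ≠ j → (f i).VDisjoint (f j)

/-- A digraph `H` is ubiquitous if every digraph containing arbitrarily many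
pairwise disjoint copies of `H` contains infinitely many. -/
def Ubiquitous {V : Type} (H : Digraph V) : Prop :=
  ∀ (W : Type) (D : Digraph W), ManyDisjointCopies H D → InfDisjointCopies H D

/-- The oriented double ray on `ℤ` determined by the orientation function `o`:
`o n = true` means the arc between `n` and `n+1` points from `n` to `n+1`. -/
def doubleRay (o : ℤ → Bool) : Digraph ℤ where
  Adj u v := (v = u + 1 ∧ o u = true) ∨ (u = v + 1 ∧ o v = false)

/-- A turn of the double ray: a vertex of in-degree 2 or out-degree 2. -/
def IsTurn (o : ℤ → Bool) (n : ℤ) : Prop := o (n - 1) ≠ o n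

/-- The oriented ray on `ℕ` determined by the orientation function `r`:
`r i = true` means the arc between `i` and `i+1` points from `i` to `i+1`
(away from the root `0`). -/
def rayD (r : ℕ → Bool) : Digraph ℕ where
  Adj u v := (v = u + 1 ∧ r u = true) ∨ (u = v + 1 ∧ r v = false)

/-- The backward tail `Rv` of the double ray, as a ray rooted at `v`:
index `i` corresponds to the vertex `v - i`. -/
def backTail (o : ℤ → Bool) (v : ℤ) : ℕ → Bool := fun i => !o (v - i - 1)

/-- The forward tail `vR` of the double ray, as a ray rooted at `v`:
index `i` corresponds to the vertex `v + i`. -/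
def fwdTail (o : ℤ → Bool) (v : ℤ) : ℕ → Bool := fun i => o (v + i)

/-- A digraph homomorphism (endomorphism) of the ray `rayD r`. -/
def IsRayHom (r : ℕ → Bool) (f : ℕ → ℕ) : Prop :=
  ∀ u v : ℕ, (rayD r).Adj u v → (rayD r).Adj (f u) (f v)

/-- A ray is periodic if it has a non-trivial order-preserving endomorphism. -/
def RayPeriodic (r : ℕ → Bool) : Prop :=
  ∃ f : ℕ → ℕ, IsRayHom r f ∧ Monotone f ∧ f ≠ id

/-- `p` is the periodicity of the ray `rayD r`: the least distance `d(v, f v)`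
over all vertices `v` and non-trivial order-preserving endomorphisms `f`. -/
def RayPeriodicity (r : ℕ → Bool) (p : ℕ) : Prop :=
  IsLeast {d : ℕ | ∃ f : ℕ → ℕ, IsRayHom r f ∧ Monotone f ∧ f ≠ id ∧
    ∃ v : ℕ, Nat.dist (f v) v = d} p

/-- A digraph homomorphism (endomorphism) of the double ray `doubleRay o`. -/
def IsDRayHom (o : ℤ → Bool) (f : ℤ → ℤ) : Prop :=
  ∀ u v : ℤ, (doubleRay o).Adj u v → (doubleRay o).Adj (f u) (f v)

/-- A double ray is periodic if it has a non-trivial order-preserving endomorphism. -/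
def DRayPeriodic (o : ℤ → Bool) : Prop :=
  ∃ f : ℤ → ℤ, IsDRayHom o f ∧ Monotone f ∧ f ≠ id

/-- `p` is the periodicity of the double ray `doubleRay o`. -/
def DRayPeriodicity (o : ℤ → Bool) (p : ℕ) : Prop :=
  IsLeast {d : ℕ | ∃ f : ℤ → ℤ, IsDRayHom o f ∧ Monotone f ∧ f ≠ id ∧
    ∃ v : ℤ, (f v - v).natAbs = d} p

/-- The rays `rayD r` and `rayD r'` are isomorphic as digraphs. -/
def RayIso (r r' : ℕ → Bool) : Prop :=
  ∃ φ : ℕ ≃ ℕ, ∀ u v : ℕ, (rayD r).Adj u v ↔ (rayD r').Adj (φ u) (φ v)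

/-- The ray `rayD r` is isomorphic to a subdigraph of the ray `rayD r'`. -/
def RayLE (r r' : ℕ → Bool) : Prop :=
  ∃ f : ℕ → ℕ, Function.Injective f ∧
    ∀ u v : ℕ, (rayD r).Adj u v → (rayD r').Adj (f u) (f v)

/-- An in-ray: every arc points towards the root. -/
def IsInRay (r : ℕ → Bool) : Prop := ∀ i : ℕ, r i = false

/-- An out-ray: every arc points away from the root. -/
def IsOutRay (r : ℕ → Bool) : Prop := ∀ i : ℕ, r i = true

/-! Finitely many copies of a finite `H` cover only finitely many vertices `S`, and among
`|S| + 1` disjoint copies one must avoid `S` by pigeonhole. So any finite family of copies can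
always be extended by a copy disjoint from all of them, which yields an infinite disjoint family. -/

theorem DCopy.VDisjoint.symm {V W : Type} {H : Digraph V} {D : Digraph W} {c₁ c₂ : DCopy H D}
    (h : c₁.VDisjoint c₂) : c₂.VDisjoint c₁ :=
  fun u v huv => h v u huv.symm

instance DCopy.instSymmVDisjoint {V W : Type} {H : Digraph V} {D : Digraph W} :
    Std.Symm (DCopy.VDisjoint (H := H) (D := D)) :=
  ⟨fun _ _ => DCopy.VDisjoint.symm⟩

namespace ManyDisjointCopies

variable {V W : Type} {H : Digraph V} {D : Digraph W}

theorem exists_copy_avoiding (hD : ManyDisjointCopies H D) {S : Set W} (hS : S.Finite) :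
    ∃ c : DCopy H D, ∀ u : V, c.toFun u ∉ S := by
  by_contra! hmeet
  obtain ⟨f, hf⟩ := hD (hS.toFinset.card + 1)
  choose g hg using fun i => hmeet (f i)
  obtain ⟨i, -, j, -, hij, hgij⟩ :=
    Finset.exists_ne_map_eq_of_card_lt_of_maps_to (s := Finset.univ)
      (f := fun i => (f i).toFun (g i)) (by simp) (fun i _ => hS.mem_toFinset.mpr (hg i))
  exact hf i j hij (g i) (g j) hgij

theorem exists_copy_vDisjoint_finset [Finite V] (hD : ManyDisjointCopies H D)
    (s : Finset (DCopy H D)) : ∃ c : DCopy H D, ∀ x ∈ s, x.VDisjoint c := by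
  obtain ⟨c, hc⟩ := hD.exists_copy_avoiding
    (s.finite_toSet.biUnion fun x _ => Set.finite_range x.toFun)
  exact ⟨c, fun x hx u v hxc => hc v (Set.mem_biUnion hx ⟨u, hxc⟩)⟩

end ManyDisjointCopies

/-- Every finite digraph is ubiquitous. -/
theorem finite_digraph_ubiquitous {V : Type} [Finite V] (H : Digraph V) :
    Ubiquitous H := by
  intro W D hD
  obtain ⟨f, -, hf⟩ := exists_seq_of_forall_finset_exists' (fun _ => True) DCopy.VDisjoint
    fun s _ => (hD.exists_copy_vDisjoint_finset s).imp fun _ hc => ⟨trivial, hc⟩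
  exact ⟨f, hf⟩
end

section
/- For every non-periodic double ray R there exists a vertex v* of R such that the tail Rv* (the subdigraph induced by all vertices ≤_R v*) is non-periodic. -/
/-- Every monotone nontrivial endomorphism of a ray is a positive shift,
so a periodic ray has a genuine period. -/
lemma ray_shift (r : ℕ → Bool) (hp : RayPeriodic r) :
    ∃ c : ℕ, 0 < c ∧ ∀ i : ℕ, r (i + c) = r i := by
  obtain ⟨f, hf, hmono, hne⟩ := hp
  have hstep : ∀ n : ℕ, f (n + 1) = f n + 1 ∧ r (f n) = r n := by
    intro n
    have hm : f n ≤ f (n + 1) := hmono (Nat.le_succ n)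
    cases hb : r n with
    | true =>
      rcases hf n (n + 1) (Or.inl ⟨rfl, hb⟩) with ⟨h1, h2⟩ | ⟨h1, h2⟩
      · exact ⟨h1, h2⟩
      · omega
    | false =>
      rcases hf (n + 1) n (Or.inr ⟨rfl, hb⟩) with ⟨h1, h2⟩ | ⟨h1, h2⟩
      · omega
      · exact ⟨h1, h2⟩
  have hfn : ∀ n : ℕ, f n = n + f 0 := by
    intro n
    induction n with
    | zero => simp
    | succ n ih => rw [(hstep n).1, ih]; omega
  refine ⟨f 0, ?_, ?_⟩
  · rcases Nat.eq_zero_or_pos (f 0) with h0 | h0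
    · exact absurd (funext fun n => by rw [hfn n, h0]; rfl) hne
    · exact h0
  · intro i
    have := (hstep i).2
    rw [hfn i] at this
    simpa [Nat.add_comm] using this

/-- every non-periodic double ray has a vertex `v*` whose backward
tail `Rv*` is a non-periodic ray. -/
theorem exists_nonperiodic_backTail (o : ℤ → Bool) (h : ¬ DRayPeriodic o) :
    ∃ v : ℤ, ¬ RayPeriodic (backTail o v) := by
  by_contra hcon
  push_neg at hcon
  apply h
  -- period on the negative part, from the tail at 0
  obtain ⟨c, hc0, hC⟩ := ray_shift _ (hcon 0)
  have hneg : ∀ m : ℤ, m ≤ -1 → o (m - c) = o m := by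
    intro m hm
    set i : ℕ := (-m - 1).toNat with hi
    have hii : (i : ℤ) = -m - 1 := by omega
    have key := hC i
    simp only [backTail] at key
    have key' : o ((0 : ℤ) - ↑(i + c) - 1) = o (0 - ↑i - 1) := by
      exact Bool.not_inj key
    have e1 : (0 : ℤ) - ↑(i + c) - 1 = m - c := by push_cast; omega
    have e2 : (0 : ℤ) - ↑i - 1 = m := by omega
    rwa [e1, e2] at key'
  -- a global period c
  have hall : ∀ m : ℤ, o (m - c) = o m := by
    intro m
    rcases le_or_gt m (-1) with hm | hm
    · exact hneg m hm
    -- m ≥ 0 : use the tail at m + 1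
    obtain ⟨c', hc'0, hC'⟩ := ray_shift _ (hcon (m + 1))
    have hP : ∀ x : ℤ, x ≤ m → o (x - c') = o x := by
      intro x hx
      set i : ℕ := (m - x).toNat with hi
      have hii : (i : ℤ) = m - x := by omega
      have key := hC' i
      simp only [backTail] at key
      have key' : o (m + 1 - ↑(i + c') - 1) = o (m + 1 - ↑i - 1) := by
        exact Bool.not_inj key
      have e1 : m + 1 - ↑(i + c') - 1 = x - c' := by push_cast; omega
      have e2 : m + 1 - (i : ℤ) - 1 = x := by omega
      rwa [e1, e2] at key'
    have hiter : ∀ N : ℕ, ∀ x : ℤ, x ≤ m → o (x - N * c') = o x := by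
      intro N
      induction N with
      | zero => intro x _; norm_num
      | succ N ih =>
        intro x hx
        have h1 : o (x - c' - N * c') = o (x - c') := ih (x - c') (by omega)
        have h2 : o (x - c') = o x := hP x hx
        have e : x - ((N : ℤ) + 1) * c' = x - c' - N * c' := by ring
        calc o (x - (↑(N + 1)) * c') = o (x - c' - N * c') := by
              rw [show ((N + 1 : ℕ) : ℤ) = (N : ℤ) + 1 by push_cast; ring, e]
          _ = o x := by rw [h1, h2]
    set N : ℕ := (m + 1).toNat with hNdef
    have hN : (N : ℤ) = m + 1 := by omega
    have hNc : (N : ℤ) ≤ (N : ℤ) * c' := by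
      have h1 : (1 : ℤ) ≤ c' := by exact_mod_cast hc'0
      nlinarith [show (0:ℤ) ≤ (N:ℤ) from Int.natCast_nonneg N]
    have step1 : o (m - c) = o (m - c - N * c') := (hiter N (m - c) (by omega)).symm
    have step2 : o (m - c - N * c') = o (m - N * c') := by
      have := hneg (m - N * c') (by omega)
      rw [show m - (N : ℤ) * c' - c = m - c - N * c' by ring] at this
      exact this
    have step3 : o (m - N * c') = o m := hiter N m le_rfl
    rw [step1, step2, step3]
  -- build the endomorphism
  refine ⟨fun n => n - c, ?_, ?_, ?_⟩
  · intro u v hadj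
    dsimp only
    rcases hadj with ⟨h1, h2⟩ | ⟨h1, h2⟩
    · exact Or.inl ⟨by omega, by rw [hall u]; exact h2⟩
    · exact Or.inr ⟨by omega, by rw [hall v]; exact h2⟩
  · intro a b hab
    simpa using hab
  · intro he
    have := congrFun he 0
    simp only [id] at this
    omega
end

section
/- Let R be a periodic ray with a non-trivial order-preserving endomorphism, let p be minimal over all vertices w and non-trivial endomorphisms f of the distance between w and f(w); then the periodicity p of R is independent of the choice of vertex: for every vertex v there is a non-trivial order-preserving endomorphism f of R with distance between v and f(v) equal to p. -/
lemma rayHom_succ (r : ℕ → Bool) (f : ℕ → ℕ) (hf : IsRayHom r f) (hm : Monotone f)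
    (n : ℕ) : f (n + 1) = f n + 1 := by
  have hmn : f n ≤ f (n + 1) := hm (Nat.le_succ n)
  rcases Bool.eq_false_or_eq_true (r n) with hr | hr
  · have := hf n (n + 1) (Or.inl ⟨rfl, hr⟩)
    rcases this with ⟨h1, _⟩ | ⟨h1, _⟩ <;> omega
  · have := hf (n + 1) n (Or.inr ⟨rfl, hr⟩)
    rcases this with ⟨h1, _⟩ | ⟨h1, _⟩ <;> omega

lemma rayHom_eq_add (r : ℕ → Bool) (f : ℕ → ℕ) (hf : IsRayHom r f) (hm : Monotone f)
    (n : ℕ) : f n = n + f 0 := by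
  induction n with
  | zero => simp
  | succ k ih => rw [rayHom_succ r f hf hm k, ih]; omega

/-- if `p` is the periodicity of a periodic ray (the minimum of
`d(w, f w)` over all vertices `w` and non-trivial order-preserving endomorphisms
`f`), then for *every* vertex `v` there is a non-trivial order-preserving
endomorphism `f` with `d(v, f v) = p`. -/
theorem rayPeriodicity_attained_at_every_vertex (r : ℕ → Bool) (p : ℕ)
    (h : RayPeriodicity r p) :
    ∀ v : ℕ, ∃ f : ℕ → ℕ, IsRayHom r f ∧ Monotone f ∧ f ≠ id ∧
      Nat.dist (f v) v = p := by
  intro v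
  obtain ⟨⟨f, hf, hm, hne, w, hw⟩, _⟩ := h
  refine ⟨f, hf, hm, hne, ?_⟩
  have h1 := rayHom_eq_add r f hf hm w
  have h2 := rayHom_eq_add r f hf hm v
  simp [Nat.dist] at hw ⊢
  omega
end

section
/- Let R be a double ray such that the ray Rw is periodic for every vertex w of R. Then R itself is periodic. -/
/-- A periodic ray has a purely periodic orientation sequence. -/
lemma rayPeriodic_purely_periodic (r : ℕ → Bool) (h : RayPeriodic r) :
    ∃ p : ℕ, 0 < p ∧ ∀ n, r (n + p) = r n := by
  obtain ⟨f, hf, hmono, hne⟩ := h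
  have key : ∀ n, f (n + 1) = f n + 1 ∧ r (f n) = r n := by
    intro n
    have hmn : f n ≤ f (n + 1) := hmono (Nat.le_succ n)
    cases hr : r n with
    | true =>
      have := hf n (n + 1) (Or.inl ⟨rfl, hr⟩)
      rcases this with ⟨h1, h2⟩ | ⟨h1, h2⟩
      · exact ⟨h1, by simp [h2, hr]⟩
      · omega
    | false =>
      have := hf (n + 1) n (Or.inr ⟨rfl, hr⟩)
      rcases this with ⟨h1, h2⟩ | ⟨h1, h2⟩
      · omega
      · exact ⟨h1, by simp [h2, hr]⟩
  have hfn : ∀ n, f n = f 0 + n := by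
    intro n
    induction n with
    | zero => rfl
    | succ k ih => rw [(key k).1, ih]; omega
  have hp0 : f 0 ≠ 0 := by
    intro h0
    apply hne
    funext n
    simp [hfn n, h0]
  refine ⟨f 0, Nat.pos_of_ne_zero hp0, fun n => ?_⟩
  have := (key n).2
  rw [hfn n] at this
  rw [← this]
  congr 1
  omega

/-- Left-periodicity extracted from periodicity of a backward tail. -/
lemma leftPeriodic (o : ℤ → Bool) (h : ∀ w : ℤ, RayPeriodic (backTail o w))
    (w : ℤ) : ∃ q : ℤ, 0 < q ∧ ∀ m : ℤ, m ≤ w - 1 → o (m - q) = o m := by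
  obtain ⟨p, hp, hP⟩ := rayPeriodic_purely_periodic _ (h w)
  refine ⟨(p : ℤ), by exact_mod_cast hp, fun m hm => ?_⟩
  have hn : ((w - 1 - m).toNat : ℤ) = w - 1 - m := Int.toNat_of_nonneg (by omega)
  have := hP (w - 1 - m).toNat
  simp only [backTail] at this
  have h1 : w - ((((w - 1 - m).toNat : ℕ) + p : ℕ) : ℤ) - 1 = m - p := by
    push_cast; omega
  have h2 : w - (((w - 1 - m).toNat : ℕ) : ℤ) - 1 = m := by omega
  rw [h1, h2] at this
  exact Bool.not_inj this

/-- Iterating left-periodicity. -/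
lemma leftPeriodic_iter (o : ℤ → Bool) (w q : ℤ) (hq : 0 < q)
    (hQ : ∀ m : ℤ, m ≤ w - 1 → o (m - q) = o m) :
    ∀ (j : ℕ) (m : ℤ), m ≤ w - 1 → o (m - j * q) = o m := by
  intro j
  induction j with
  | zero => intro m _; simp
  | succ k ih =>
    intro m hm
    have hmk : m - k * q ≤ w - 1 := by nlinarith [Int.natCast_nonneg k]
    have h1 : o (m - k * q - q) = o (m - k * q) := hQ _ hmk
    have h2 : m - ((k : ℤ) + 1) * q = m - k * q - q := by ring
    calc o (m - (k + 1 : ℕ) * q) = o (m - k * q - q) := by rw [← h2]; push_cast; ring_nf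
      _ = o (m - k * q) := h1
      _ = o m := ih m hm

/-- if every backward tail `Rw` of a double ray `R` is periodic,
then `R` itself is periodic. -/
theorem dRayPeriodic_of_all_backTails_periodic (o : ℤ → Bool)
    (h : ∀ w : ℤ, RayPeriodic (backTail o w)) :
    DRayPeriodic o := by
  obtain ⟨p, hp, hP⟩ := leftPeriodic o h 0
  have key : ∀ m : ℤ, o (m - p) = o m := by
    intro m
    obtain ⟨q, hq, hQ⟩ := leftPeriodic o h (m + 2)
    set k : ℕ := (m + 2).toNat + 1 with hk
    have hkq : m - k * q ≤ -1 := by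
      have hk1 : (m + 2 : ℤ) ≤ (k : ℤ) := by
        rw [hk]; push_cast
        have := Int.self_le_toNat (m + 2); omega
      nlinarith
    have h1 : o (m - k * q) = o m := leftPeriodic_iter o (m + 2) q hq hQ k m (by omega)
    have h2 : o (m - p - k * q) = o (m - p) := by
      refine leftPeriodic_iter o (m + 2) q hq hQ k (m - p) (by omega)
    have h3 : o (m - k * q - p) = o (m - k * q) := hP _ (by omega)
    calc o (m - p) = o (m - p - k * q) := h2.symm
      _ = o (m - k * q - p) := by ring_nf
      _ = o (m - k * q) := h3
      _ = o m := h1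
  refine ⟨fun x => x - p, ?_, fun a b hab => by dsimp; omega, ?_⟩
  · intro u v hadj
    rcases hadj with ⟨h1, h2⟩ | ⟨h1, h2⟩
    · exact Or.inl ⟨show v - p = u - p + 1 by omega, by rw [key u]; exact h2⟩
    · exact Or.inr ⟨show u - p = v - p + 1 by omega, by rw [key v]; exact h2⟩
  · intro heq
    have := congrFun heq 0
    simp only [id] at this
    omega
end

section
/- Let R be a double ray, let u <_R v be vertices, and suppose Rv is periodic with periodicity p and p is minimal among the periodicities of all periodic tails Rw of R. Then Ru is periodic with periodicity exactly p. -/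
lemma hom_add (r : ℕ → Bool) (f : ℕ → ℕ) (hf : IsRayHom r f) (hm : Monotone f) :
    ∀ n, f n = n + f 0 := by
  intro n
  induction n with
  | zero => simp
  | succ n ih =>
    have hstep : f (n + 1) = f n + 1 := by
      cases h : r n with
      | true =>
        have hadj : (rayD r).Adj n (n + 1) := Or.inl ⟨rfl, h⟩
        rcases hf n (n + 1) hadj with ⟨h1, _⟩ | ⟨h1, _⟩
        · exact h1
        · have := hm (show n ≤ n + 1 by omega); omega
      | false =>
        have hadj : (rayD r).Adj (n + 1) n := Or.inr ⟨rfl, h⟩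
        rcases hf (n + 1) n hadj with ⟨h1, _⟩ | ⟨h1, _⟩
        · have := hm (show n ≤ n + 1 by omega); omega
        · exact h1
    omega

lemma hom_period (r : ℕ → Bool) (c : ℕ) (f : ℕ → ℕ) (hf : IsRayHom r f)
    (hfc : ∀ n, f n = n + c) : ∀ n, r (n + c) = r n := by
  intro n
  cases h : r n with
  | true =>
    have hadj : (rayD r).Adj n (n + 1) := Or.inl ⟨rfl, h⟩
    have := hf n (n + 1) hadj
    rw [hfc n, hfc (n + 1)] at this
    rcases this with ⟨_, h2⟩ | ⟨h1, _⟩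
    · exact h2
    · omega
  | false =>
    have hadj : (rayD r).Adj (n + 1) n := Or.inr ⟨rfl, h⟩
    have := hf (n + 1) n hadj
    rw [hfc n, hfc (n + 1)] at this
    rcases this with ⟨h1, _⟩ | ⟨_, h2⟩
    · omega
    · exact h2

lemma period_mem (r : ℕ → Bool) (c : ℕ) (hc : 0 < c) (hper : ∀ n, r (n + c) = r n) :
    ∃ f : ℕ → ℕ, IsRayHom r f ∧ Monotone f ∧ f ≠ id ∧
      ∃ v : ℕ, Nat.dist (f v) v = c := by
  refine ⟨fun n => n + c, ?_, fun a b h => Nat.add_le_add_right h c, ?_, 0, ?_⟩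
  · intro a b hab
    rcases hab with ⟨h1, h2⟩ | ⟨h1, h2⟩
    · exact Or.inl ⟨show b + c = a + c + 1 by omega, (hper a).trans h2⟩
    · exact Or.inr ⟨show a + c = b + c + 1 by omega, (hper b).trans h2⟩
  · intro h
    have := congrFun h 0
    simp at this
    omega
  · simp [Nat.dist]

/-- if `u <_R v`, the tail `Rv` has periodicity `p`, and `p` is
minimal among the periodicities of all periodic tails of `R`, then `Ru` has
periodicity exactly `p`. -/
theorem backTail_periodicity_eq_min (o : ℤ → Bool) (u v : ℤ) (p : ℕ)
    (huv : u < v)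
    (hp : RayPeriodicity (backTail o v) p)
    (hmin : ∀ w : ℤ, ∀ q : ℕ, RayPeriodicity (backTail o w) q → p ≤ q) :
    RayPeriodicity (backTail o u) p := by
  obtain ⟨⟨g, hg, hgm, hgne, n₀, hdist⟩, hlb⟩ := hp
  have hgform := hom_add _ g hg hgm
  set c := g 0 with hc
  have hpc : p = c := by
    have := hgform n₀
    simp [Nat.dist, this] at hdist
    omega
  have hcpos : 0 < c := by
    rcases Nat.eq_zero_or_pos c with h0 | h
    · exfalso
      apply hgne
      funext n
      simp [hgform n, ← hc, h0]
    · exact h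
  have hper_v : ∀ n, backTail o v (n + c) = backTail o v n := hom_period _ c g hg hgform
  set d := (v - u).toNat with hdd
  have hd : (d : ℤ) = v - u := Int.toNat_of_nonneg (by omega)
  have hshift : ∀ n : ℕ, backTail o u n = backTail o v (n + d) := by
    intro n
    show (!o (u - n - 1)) = (!o (v - (n + d : ℕ) - 1))
    congr 1
    rw [Int.natCast_add, hd]
    ring_nf
  have hper_u : ∀ n, backTail o u (n + c) = backTail o u n := by
    intro n
    rw [hshift, hshift]
    have h : n + c + d = (n + d) + c := by ring
    rw [h, hper_v]
  have hmem := period_mem (backTail o u) c hcpos hper_u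
  subst hpc
  constructor
  · exact hmem
  · intro q hq
    have hne : {d : ℕ | ∃ f : ℕ → ℕ, IsRayHom (backTail o u) f ∧ Monotone f ∧ f ≠ id ∧
        ∃ w : ℕ, Nat.dist (f w) w = d}.Nonempty := ⟨c, hmem⟩
    have hleast : RayPeriodicity (backTail o u) (sInf _) :=
      ⟨Nat.sInf_mem hne, fun x hx => Nat.sInf_le hx⟩
    exact le_trans (hmin u _ hleast) (Nat.sInf_le hq)
end

section
/- For every non-periodic double ray R there exists a vertex v* such that for all vertices v ≥_R v* and all vertices w of R, if the rays Rv and Rw are isomorphic as digraphs, then v = w. -/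
lemma adj_sym (r : ℕ → Bool) (u v : ℕ) :
    ((rayD r).Adj u v ∨ (rayD r).Adj v u) ↔ (v = u + 1 ∨ u = v + 1) := by
  simp only [rayD]
  cases hu : r u <;> cases hv : r v <;> tauto

lemma rayIso_eq {r r' : ℕ → Bool} (h : RayIso r r') : r = r' := by
  obtain ⟨φ, hφ⟩ := h
  have hE : ∀ u v : ℕ, (v = u + 1 ∨ u = v + 1) ↔ (φ v = φ u + 1 ∨ φ u = φ v + 1) := by
    intro u v
    rw [← adj_sym r u v, ← adj_sym r' (φ u) (φ v)]
    rw [hφ u v, hφ v u]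
  have h0 : φ 0 = 0 := by
    by_contra h0
    obtain ⟨m, hm⟩ : ∃ m, φ 0 = m + 1 := ⟨φ 0 - 1, by omega⟩
    have hx : φ.symm (m + 2) = 1 := by
      have := (hE 0 (φ.symm (m + 2))).mpr (by simp [hm])
      omega
    have hy : φ.symm m = 1 := by
      have := (hE 0 (φ.symm m)).mpr (by simp [hm])
      omega
    have : m + 2 = m := by
      have := hx.trans hy.symm
      exact φ.symm.injective this
    omega
  have key : ∀ n, φ n = n ∧ φ (n + 1) = n + 1 := by
    intro n
    induction n with
    | zero =>
      refine ⟨h0, ?_⟩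
      show φ 1 = 1
      have := (hE 0 1).mp (Or.inl rfl)
      omega
    | succ n ih =>
      refine ⟨ih.2, ?_⟩
      show φ (n + 2) = n + 2
      have h12 : φ (n + 1) = n + 1 := ih.2
      have h11 : φ n = n := ih.1
      have := (hE (n + 1) (n + 2)).mp (Or.inl rfl)
      rcases this with h1 | h1
      · omega
      · exfalso
        have he : φ (n + 2) = φ n := by omega
        have := φ.injective he
        omega
  funext u
  have := hφ u (u + 1)
  rw [(key u).1, (key u).2] at this
  simp only [rayD] at this
  have hne : ¬ (u = u + 1 + 1) := by omega
  simp only [hne, false_and, or_false, eq_self_iff_true, true_and] at this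
  cases hu : r u <;> cases hu' : r' u
  · rfl
  · rw [hu, hu'] at this; simp at this
  · rw [hu, hu'] at this; simp at this
  · rfl

lemma backtail_period {o : ℤ → Bool} {v w : ℤ} (heq : backTail o v = backTail o w) :
    ∀ n : ℤ, n ≤ v - 1 → o n = o (n + (w - v)) := by
  intro n hn
  have hfun := congrFun heq (v - 1 - n).toNat
  simp only [backTail] at hfun
  have hcast : ((v - 1 - n).toNat : ℤ) = v - 1 - n := Int.toNat_of_nonneg (by omega)
  rw [hcast] at hfun
  have h1 : v - (v - 1 - n) - 1 = n := by ring
  have h2 : w - (v - 1 - n) - 1 = n + (w - v) := by ring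
  rw [h1, h2] at hfun
  exact Bool.not_inj hfun

/-- one step down by |d| -/
lemma step_down {o : ℤ → Bool} {T d : ℤ} (hp : ∀ n ≤ T, o n = o (n + d)) :
    ∀ n ≤ T, o n = o (n - |d|) := by
  intro n hn
  rcases abs_cases d with ⟨h1, h2⟩ | ⟨h1, h2⟩
  · rw [h1]
    have := hp (n - d) (by omega)
    rw [sub_add_cancel] at this
    exact this.symm
  · rw [h1]
    have := hp n hn
    rw [show n - -d = n + d by ring]
    exact this
lemma iter_down {o : ℤ → Bool} {T d : ℤ} (hp : ∀ n ≤ T, o n = o (n + d)) :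
    ∀ k : ℕ, ∀ n ≤ T, o n = o (n - k * |d|) := by
  intro k
  induction k with
  | zero => intro n _; simp
  | succ k ih =>
    intro n hn
    have h1 := step_down hp n hn
    have h2 := ih (n - |d|) (by have := abs_nonneg d; omega)
    rw [h1, h2]
    congr 1
    push_cast
    ring

/-- positive-shift version of a tail period -/
lemma abs_tail {o : ℤ → Bool} {T d : ℤ} (hp : ∀ n ≤ T, o n = o (n + d)) :
    ∀ n ≤ T - |d|, o n = o (n + |d|) := by
  intro n hn
  rcases abs_cases d with ⟨h1, h2⟩ | ⟨h1, h2⟩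
  · rw [h1]; exact hp n (by omega)
  · rw [h1]
    have := hp (n - d) (by omega)
    rw [sub_add_cancel] at this
    rw [show n + -d = n - d by ring]
    exact this.symm


/-- for every non-periodic double ray there is a vertex `v*` such
that for all `v ≥ v*` and all `w`, if `Rv ≅ Rw` then `v = w`. -/
theorem exists_vertex_backTail_iso_unique (o : ℤ → Bool) (h : ¬ DRayPeriodic o) :
    ∃ vstar : ℤ, ∀ v : ℤ, vstar ≤ v → ∀ w : ℤ,
      RayIso (backTail o v) (backTail o w) → v = w := by
  by_contra hcon
  push_neg at hcon
  have hc : ∀ vstar : ℤ, ∃ v, vstar ≤ v ∧ ∃ w, backTail o v = backTail o w ∧ v ≠ w := by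
    intro vstar
    obtain ⟨v, hv, w, hiso, hne⟩ := hcon vstar
    exact ⟨v, hv, w, rayIso_eq hiso, hne⟩

  -- first instance: extract a positive tail period g
  obtain ⟨v₀, -, w₀, heq₀, hne₀⟩ := hc 0
  set d₀ := w₀ - v₀ with hd₀
  have hp₀ : ∀ n ≤ v₀ - 1, o n = o (n + d₀) := backtail_period heq₀
  set g := |d₀| with hg
  have hgpos : 0 < g := abs_pos.mpr (by omega)
  set Tg := v₀ - 1 - g with hTg
  have hgper : ∀ n ≤ Tg, o n = o (n + g) := abs_tail hp₀
  -- full periodicity with period g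
  have hper : ∀ n : ℤ, o n = o (n + g) := by
    intro n
    obtain ⟨v, hv, w, heq, hne⟩ := hc (n + g + 2)
    set d := w - v with hd
    have hp : ∀ m ≤ v - 1, o m = o (m + d) := backtail_period heq
    have hdne : d ≠ 0 := by omega
    have hepos : 0 < |d| := abs_pos.mpr hdne
    set k : ℕ := (v - Tg).toNat with hk
    have hkk : (k : ℤ) ≥ v - Tg := Int.self_le_toNat _
    have hkd : (k : ℤ) * |d| ≥ (k : ℤ) := le_mul_of_one_le_right (by positivity) hepos
    have a1 : o n = o (n - k * |d|) := iter_down hp k n (by omega)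
    have a2 : o (n + g) = o (n + g - k * |d|) := iter_down hp k (n + g) (by omega)
    have a3 : o (n - k * |d|) = o (n - k * |d| + g) := hgper _ (by omega)
    rw [a1, a3, a2]
    congr 1
    ring
  -- build the periodic endomorphism
  apply h
  refine ⟨fun x => x + g, ?_, ?_, ?_⟩
  · intro u v hadj
    rcases hadj with ⟨h1, h2⟩ | ⟨h1, h2⟩
    · exact Or.inl ⟨by show v + g = u + g + 1; omega, by show o (u + g) = true; rw [← hper u]; exact h2⟩
    · exact Or.inr ⟨by show u + g = v + g + 1; omega, by show o (v + g) = false; rw [← hper v]; exact h2⟩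
  · intro a b hab
    simpa using hab
  · intro hid
    have := congrFun hid 0
    simp at this
    omega
end

section
/- Let R be a non-periodic double ray, v* as in the uniqueness lemma, and suppose for every v ≥_R v* there is a (unique) vertex α(v) with Rv ≅ α(v)R. Then α is strictly order-reversing: if v* ≤_R v <_R v', then α(v') <_R α(v). Consequently there is a vertex v̂ ≥_R v* with α(v̂) <_R v̂. -/
lemma rayAdj_symm (s : ℕ → Bool) (u v : ℕ) :
    ((rayD s).Adj u v ∨ (rayD s).Adj v u) ↔ (v = u + 1 ∨ u = v + 1) := by
  cases h1 : s u <;> cases h2 : s v <;> simp [rayD, h1, h2] <;> tauto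

lemma rayIso_of_eq {r r' : ℕ → Bool} (h : r = r') : RayIso r r' := by
  subst h
  exact ⟨Equiv.refl ℕ, fun u v => Iff.rfl⟩

/-- with `v*` as in the uniqueness lemma and `α` a function with
`Rv ≅ α(v)R` for all `v ≥ v*`, the map `α` is strictly order-reversing, and
consequently there is a vertex `v̂ ≥ v*` with `α(v̂) < v̂`. -/
theorem alpha_antitone_and_exists_fixpointish (o : ℤ → Bool) (vstar : ℤ)
    (α : ℤ → ℤ)
    (hR : ¬ DRayPeriodic o)
    (huniq : ∀ v : ℤ, vstar ≤ v → ∀ w : ℤ,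
      RayIso (backTail o v) (backTail o w) → v = w)
    (huniqα : ∀ v : ℤ, vstar ≤ v → ∀ a : ℤ,
      RayIso (backTail o v) (fwdTail o a) → a = α v)
    (hα : ∀ v : ℤ, vstar ≤ v → RayIso (backTail o v) (fwdTail o (α v))) :
    (∀ v v' : ℤ, vstar ≤ v → v < v' → α v' < α v) ∧
      ∃ vhat : ℤ, vstar ≤ vhat ∧ α vhat < vhat := by
  have e : ∀ v : ℤ, vstar ≤ v → ∀ i : ℕ, (!o (v - i - 1)) = o (α v + i) := by
    intro v hv i
    have h1 := congrFun (rayIso_eq (hα v hv)) i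
    simpa [backTail, fwdTail] using h1
  have anti : ∀ v v' : ℤ, vstar ≤ v → v < v' → α v' < α v := by
    intro v v' hv hvv'
    by_contra hle
    push_neg at hle
    have hv' : vstar ≤ v' := by omega
    set d : ℤ := v' - v with hd
    set s : ℤ := α v' + d - α v with hs
    have hs1 : 1 ≤ s := by omega
    have heq : backTail o v = backTail o (v - s) := by
      funext i
      show (!o (v - i - 1)) = (!o (v - s - i - 1))
      have h1 : (!o (v - s - i - 1)) = o (α v + s + i) := by
        have h := e v hv (s + i).toNat
        rw [Int.toNat_of_nonneg (by omega)] at h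
        have harg : v - (s + (i : ℤ)) - 1 = v - s - i - 1 := by ring
        have harg2 : α v + (s + (i : ℤ)) = α v + s + i := by ring
        rw [harg, harg2] at h
        exact h
      have h2 : (!o (v - i - 1)) = o (α v' + (d + i)) := by
        have h := e v' hv' (d + i).toNat
        rw [Int.toNat_of_nonneg (by omega)] at h
        have harg : v' - (d + (i : ℤ)) - 1 = v - i - 1 := by rw [hd]; ring
        rw [harg] at h
        exact h
      have harg3 : α v + s + (i : ℤ) = α v' + (d + i) := by rw [hs]; ring
      rw [h1, harg3, ← h2]
    have := huniq v hv (v - s) (rayIso_of_eq heq)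
    omega
  refine ⟨anti, ?_⟩
  have step : ∀ n : ℕ, α (vstar + n) ≤ α vstar - n := by
    intro n
    induction n with
    | zero => simp
    | succ n ih =>
      have h1 : α (vstar + (n + 1 : ℕ)) < α (vstar + n) := by
        apply anti (vstar + n) _ (by omega)
        push_cast; omega
      push_cast at h1 ⊢
      omega
  set n : ℕ := (α vstar - vstar).toNat + 1 with hn
  refine ⟨vstar + n, by omega, ?_⟩
  have h1 := step n
  have h2 : α vstar - vstar ≤ ((α vstar - vstar).toNat : ℤ) := Int.self_le_toNat _
  have h3 : ((n : ℕ) : ℤ) = ((α vstar - vstar).toNat : ℤ) + 1 := by rw [hn]; push_cast; ring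
  omega
end

section
/- An oriented double ray with an even, non-zero number of turns contains exactly one tail that is an in-ray and exactly one tail that is an out-ray; more precisely, if s is the first turn and t is the last turn of R, then exactly one of Rs and tR is an in-ray and the other is an out-ray. -/
/-! The orientation flips exactly at the turns, so the parity of the number of turns in `(m, n]`
records whether the arcs `{m, m + 1}` and `{n, n + 1}` are oriented alike. All turns lie in
`[s, t]`, so both tails are consistently oriented; an even number of turns makes the arc below `s`
point like the arcs from `t` on, hence the two tails point in opposite directions relative to
their roots. -/

instance (o : ℤ → Bool) : DecidablePred (IsTurn o) :=
  fun n => inferInstanceAs (Decidable (o (n - 1) ≠ o n))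

open Finset

namespace IsTurn

variable {o : ℤ → Bool}

theorem even_card_Ioc_iff {m n : ℤ} (hmn : m ≤ n) :
    Even #{k ∈ Ioc m n | IsTurn o k} ↔ o n = o m := by
  induction n, hmn using Int.leInduction with
  | base => simp
  | succ n hmn ih =>
    rw [← insert_Ioc_right_eq_Ioc_add_one hmn, filter_insert]
    by_cases hturn : IsTurn o (n + 1)
    · have hflip : o n ≠ o (n + 1) := by simpa [IsTurn] using hturn
      rw [if_pos hturn, card_insert_of_notMem (by simp), Nat.even_add_one, ih]
      revert hflip
      cases o m <;> cases o n <;> cases o (n + 1) <;> simp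
    · have hkeep : o n = o (n + 1) := by simpa [IsTurn] using hturn
      rw [if_neg hturn, ih, hkeep]

theorem eq_of_forall_mem_Ioc_not {m n : ℤ} (hmn : m ≤ n)
    (h : ∀ k ∈ Ioc m n, ¬ IsTurn o k) : o n = o m := by
  rw [← even_card_Ioc_iff hmn, filter_false_of_mem h]
  exact .zero

theorem eq_of_le_first {s n : ℤ} (hs : ∀ k, IsTurn o k → s ≤ k) (hn : n ≤ s - 1) :
    o n = o (s - 1) :=
  (eq_of_forall_mem_Ioc_not hn fun k hk hturn => by
    have := hs k hturn; simp only [mem_Ioc] at hk; omega).symm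

theorem eq_of_last_le {t n : ℤ} (ht : ∀ k, IsTurn o k → k ≤ t) (hn : t ≤ n) :
    o n = o t :=
  eq_of_forall_mem_Ioc_not hn fun k hk hturn => by
    have := ht k hturn; simp only [mem_Ioc] at hk; omega

theorem setOf_eq_filter_Ioc {s t : ℤ} (hs : ∀ k, IsTurn o k → s ≤ k)
    (ht : ∀ k, IsTurn o k → k ≤ t) :
    {k | IsTurn o k} = ↑({k ∈ Ioc (s - 1) t | IsTurn o k}) := by
  ext k
  simp only [Set.mem_ofPred_eq, coe_filter, mem_Ioc]
  exact ⟨fun h => ⟨⟨by linarith [hs k h], ht k h⟩, h⟩, fun h => h.2⟩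

end IsTurn

theorem backTail_eq_of_le_first_turn {o : ℤ → Bool} {s : ℤ}
    (hs : ∀ k, IsTurn o k → s ≤ k) : backTail o s = fun _ => !o (s - 1) :=
  funext fun i => by
    rw [backTail, IsTurn.eq_of_le_first hs (by omega : s - i - 1 ≤ s - 1)]

theorem fwdTail_eq_of_last_turn_le {o : ℤ → Bool} {t : ℤ}
    (ht : ∀ k, IsTurn o k → k ≤ t) : fwdTail o t = fun _ => o t :=
  funext fun i => IsTurn.eq_of_last_le ht (by omega)

theorem even_turns_in_out_ray_general (o : ℤ → Bool) (s t : ℤ)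
    (heven : Even {n : ℤ | IsTurn o n}.ncard)
    (hs : IsTurn o s ∧ ∀ n : ℤ, IsTurn o n → s ≤ n)
    (ht : IsTurn o t ∧ ∀ n : ℤ, IsTurn o n → n ≤ t) :
    Xor' (IsInRay (backTail o s) ∧ IsOutRay (fwdTail o t))
         (IsOutRay (backTail o s) ∧ IsInRay (fwdTail o t)) := by
  have hst : s - 1 ≤ t := by linarith [ht.2 s hs.1]
  have hends : o t = o (s - 1) := by
    rwa [IsTurn.setOf_eq_filter_Ioc hs.2 ht.2, Set.ncard_coe_finset,
      IsTurn.even_card_Ioc_iff hst] at heven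
  rw [backTail_eq_of_le_first_turn hs.2, fwdTail_eq_of_last_turn_le ht.2, hends]
  cases o (s - 1) <;> simp [IsInRay, IsOutRay, Xor']

/-- if a double ray has an even, non-zero (finite) number of turns,
`s` is its first turn and `t` its last turn, then exactly one of the tails
`Rs`, `tR` is an in-ray and the other is an out-ray. -/
theorem even_turns_in_out_ray (o : ℤ → Bool) (s t : ℤ)
    (hfin : {n : ℤ | IsTurn o n}.Finite)
    (hne : {n : ℤ | IsTurn o n}.Nonempty)
    (heven : Even {n : ℤ | IsTurn o n}.ncard)
    (hs : IsTurn o s ∧ ∀ n : ℤ, IsTurn o n → s ≤ n)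
    (ht : IsTurn o t ∧ ∀ n : ℤ, IsTurn o n → n ≤ t) :
    Xor' (IsInRay (backTail o s) ∧ IsOutRay (fwdTail o t))
         (IsOutRay (backTail o s) ∧ IsInRay (fwdTail o t)) :=
  even_turns_in_out_ray_general o s t heven hs ht
end

section
/- Let R be a double ray with an odd (finite) number of turns, and let Ĥ be a finite connected subdigraph (subpath) of R containing all turns of R as internal vertices. Then the digraph obtained from R by deleting the internal vertices of Ĥ is the disjoint union of two rays which are either both in-rays or both out-rays. -/
/-- if a double ray has an odd number of turns and the finite
subpath from `a` to `b` contains all turns as internal vertices, then deleting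
its internal vertices leaves two rays (`Ra` and `bR`) which are either both
in-rays or both out-rays. -/
theorem odd_turns_two_rays_same_direction (o : ℤ → Bool) (a b : ℤ)
    (hfin : {n : ℤ | IsTurn o n}.Finite)
    (hodd : Odd {n : ℤ | IsTurn o n}.ncard)
    (hab : ∀ n : ℤ, IsTurn o n → a < n ∧ n < b) :
    (IsInRay (backTail o a) ∧ IsInRay (fwdTail o b)) ∨
    (IsOutRay (backTail o a) ∧ IsOutRay (fwdTail o b)) := by
  have hno : ∀ n : ℤ, ¬(a < n ∧ n < b) → o (n - 1) = o n := by
    intro n hn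
    by_contra h
    exact hn (hab n h)
  -- o is constant on (-∞, a]
  have hlow : ∀ j : ℕ, o (a - j) = o a := by
    intro j
    induction j with
    | zero => simp
    | succ j ih =>
      have h1 : a - ((j : ℤ) + 1) = a - j - 1 := by ring
      have h2 := hno (a - j) (by omega)
      push_cast
      rw [h1, h2, ih]
  -- o is constant on [b-1, ∞)
  have hhigh : ∀ j : ℕ, o (b - 1 + j) = o (b - 1) := by
    intro j
    induction j with
    | zero => simp
    | succ j ih =>
      have h2 := hno (b + j) (by omega)
      have h1 : b - 1 + ((j : ℤ) + 1) = b + j := by ring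
      have h3 : b + (j : ℤ) - 1 = b - 1 + j := by ring
      push_cast
      rw [h1, ← h2, h3, ih]
  -- parity lemma
  set S : ℕ → Set ℤ := fun k => {n : ℤ | IsTurn o n ∧ a < n ∧ n ≤ a + k} with hS
  have hSfin : ∀ k, (S k).Finite := fun k => hfin.subset (fun n hn => hn.1)
  have hpar : ∀ k : ℕ, (o (a + k) = o a ↔ Even (S k).ncard) := by
    intro k
    induction k with
    | zero =>
      have : S 0 = ∅ := by
        ext n; simp only [hS, Set.mem_setOf_eq, Set.mem_empty_iff_false, iff_false]
        rintro ⟨_, h1, h2⟩; omega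
      simp [this]
    | succ k ih =>
      have hcast : a + ((k : ℤ) + 1) = a + k + 1 := by ring
      by_cases ht : IsTurn o (a + k + 1)
      · have hne : o (a + k) ≠ o (a + k + 1) := by
          have := ht
          unfold IsTurn at this
          have h3 : a + (k : ℤ) + 1 - 1 = a + k := by ring
          rwa [h3] at this
        have hmem : (a + (k : ℤ) + 1) ∉ S k := by
          simp only [hS, Set.mem_setOf_eq]; rintro ⟨_, _, h⟩; omega
        have hstep : S (k + 1) = insert (a + (k : ℤ) + 1) (S k) := by
          ext n
          simp only [hS, Set.mem_setOf_eq, Set.mem_insert_iff]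
          constructor
          · rintro ⟨h1, h2, h3⟩
            by_cases hn : n = a + (k : ℤ) + 1
            · left; exact hn
            · right; refine ⟨h1, h2, ?_⟩; push_cast at h3; omega
          · rintro (h | ⟨h1, h2, h3⟩)
            · subst h; exact ⟨ht, by omega, by push_cast; omega⟩
            · exact ⟨h1, h2, by push_cast; omega⟩
        have hcard : (S (k + 1)).ncard = (S k).ncard + 1 := by
          rw [hstep, Set.ncard_insert_of_notMem hmem (hSfin k)]
        push_cast
        rw [hcast, hcard]
        rw [Nat.even_add_one]
        constructor
        · intro h hEv
          have := ih.mpr hEv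
          rw [← this] at h
          exact hne h.symm
        · intro h
          cases h1 : o a <;> cases h2 : o (a + (k:ℤ)) <;> cases h3 : o (a + (k:ℤ) + 1) <;>
            simp_all
      · have heq : o (a + k) = o (a + k + 1) := by
          by_contra h
          apply ht
          unfold IsTurn
          have h3 : a + (k : ℤ) + 1 - 1 = a + k := by ring
          rw [h3]; exact h
        have hstep : S (k + 1) = S k := by
          ext n
          simp only [hS, Set.mem_setOf_eq]
          constructor
          · rintro ⟨h1, h2, h3⟩
            refine ⟨h1, h2, ?_⟩
            push_cast at h3
            by_cases hn : n = a + (k : ℤ) + 1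
            · exfalso; apply ht; rwa [← hn]
            · omega
          · rintro ⟨h1, h2, h3⟩
            exact ⟨h1, h2, by push_cast; omega⟩
        push_cast
        rw [hcast, ← heq, hstep, ← ih]
  -- there exists a turn, so a + 1 ≤ b - 1
  obtain ⟨t, ht⟩ : {n : ℤ | IsTurn o n}.Nonempty := by
    rcases Set.eq_empty_or_nonempty {n : ℤ | IsTurn o n} with h | h
    · exfalso; rw [h] at hodd; simp at hodd
    · exact h
  obtain ⟨hta, htb⟩ := hab t ht
  have hk : a + ((b - 1 - a).toNat : ℤ) = b - 1 := by omega
  have hSfull : S (b - 1 - a).toNat = {n : ℤ | IsTurn o n} := by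
    ext n
    simp only [hS, Set.mem_setOf_eq]
    constructor
    · rintro ⟨h1, _, _⟩; exact h1
    · intro h1
      obtain ⟨h2, h3⟩ := hab n h1
      exact ⟨h1, h2, by omega⟩
  have hkey : o (b - 1) ≠ o a := by
    intro h
    have := (hpar (b - 1 - a).toNat).mp (by rw [hk]; exact h)
    rw [hSfull] at this
    exact (Nat.not_even_iff_odd.mpr hodd) this
  have hback : ∀ i : ℕ, backTail o a i = !o a := by
    intro i
    unfold backTail
    have h1 : a - (i : ℤ) - 1 = a - ((i : ℤ) + 1) := by ring
    have := hlow (i + 1)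
    push_cast at this
    rw [h1, this]
  have hfwd : ∀ i : ℕ, fwdTail o b i = o (b - 1) := by
    intro i
    unfold fwdTail
    have h1 : b + (i : ℤ) = b - 1 + ((i : ℤ) + 1) := by ring
    have := hhigh (i + 1)
    push_cast at this
    rw [h1, this]
  cases ha : o a
  · right
    constructor
    · intro i; rw [hback i, ha]; rfl
    · intro i
      rw [hfwd i]
      cases hb : o (b - 1)
      · exact absurd (by rw [hb, ha]) hkey
      · rfl
  · left
    constructor
    · intro i; rw [hback i, ha]; rfl
    · intro i
      rw [hfwd i]
      cases hb : o (b - 1)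
      · rfl
      · exact absurd (by rw [hb, ha]) hkey
end

section
/- Every periodic oriented double ray with infinitely many turns is non-ubiquitous. -/
open Function

lemma Function.Periodic.eq_of_dvd_sub {α : Type*} {f : ℤ → α} {p : ℤ} (h : Periodic f p)
    {x y : ℤ} (hxy : p ∣ x - y) : f x = f y := by
  obtain ⟨k, hk⟩ := hxy
  simpa [show y + k * p = x by linarith] using h.int_mul k y

lemma Function.Periodic.eq_of_eqOn_Ico {α : Type*} {F G : ℤ → α} {p : ℤ} (hp : 0 < p)
    (hF : Periodic F p) (hG : Periodic G p) (h : Set.EqOn F G (Set.Ico 0 p)) : F = G := by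
  funext z
  rw [← hF.sub_int_mul_eq (z / p), ← hG.sub_int_mul_eq (z / p), Int.cast_id,
    show z - z / p * p = z % p by rw [Int.emod_def, mul_comm]]
  exact h ⟨Int.emod_nonneg z hp.ne', Int.emod_lt_of_pos z hp⟩

lemma Int.surjective_of_injective_of_step {f : ℤ → ℤ} (hf : Injective f)
    (hstep : ∀ u, f (u + 1) = f u + 1 ∨ f (u + 1) = f u - 1) : Surjective f := by
  set d := f 1 - f 0
  have hd : d * d = 1 := by rcases hstep 0 with h | h <;> rw [zero_add] at h <;> simp [d, h]
  have hconst : Periodic (fun u => f (u + 1) - f u) 1 := fun u => by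
    have : f (u + 1 + 1) ≠ f u := fun h => by have := hf h; omega
    rcases hstep u with h | h <;> rcases hstep (u + 1) with h' | h' <;> simp only <;> omega
  have hlin : ∀ u, f u = f 0 + d * u := by
    have : Periodic (fun u => f u - d * u) 1 := fun u => by
      have := hconst.int_mul_eq u
      simp only [Int.cast_id, mul_one, zero_add] at this ⊢
      linarith
    intro u
    have := this.int_mul_eq u
    simp only [Int.cast_id, mul_one, mul_zero, sub_zero] at this
    linarith
  intro z
  exact ⟨d * (z - f 0), by rw [hlin, ← mul_assoc, hd]; ring⟩

namespace DoubleRayNonUbiquity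

section Orientation

variable {o : ℤ → Bool} {p a b ε : ℤ}

def reverseOrient (o : ℤ → Bool) : ℤ → Bool := fun z => !o (-1 - z)

/-- The orientation of `doubleRay o` as seen by walking from `b` in direction `ε = ±1`. -/
def orientAlong (o : ℤ → Bool) (b ε : ℤ) : ℤ → Bool :=
  fun t => if ε = 1 then o (b + t) else !o (b - 1 - t)

lemma reverseOrient_involutive : Involutive reverseOrient :=
  fun o => funext fun z => by simp [reverseOrient]

lemma reverseOrient_shift (o : ℤ → Bool) (m : ℤ) :
    (fun t => reverseOrient o (-m + t)) = reverseOrient (fun t => o (m + t)) :=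
  funext fun t => by simp only [reverseOrient]; ring_nf

lemma orientAlong_neg (hε : ε = 1 ∨ ε = -1) :
    orientAlong o b (-ε) = reverseOrient (orientAlong o b ε) := by
  funext t
  rcases hε with rfl | rfl <;> simp [orientAlong, reverseOrient] <;> ring_nf

lemma orientAlong_add_mul (hε : ε = 1 ∨ ε = -1) (t : ℤ) :
    orientAlong o (b + ε * t) ε 0 = orientAlong o b ε t := by
  rcases hε with rfl | rfl
  · simp [orientAlong]
  · simp [orientAlong, sub_right_comm, ← sub_eq_add_neg]

lemma doubleRay_reverseOrient_adj {u v : ℤ} :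
    (doubleRay (reverseOrient o)).Adj u v ↔ (doubleRay o).Adj (-u) (-v) := by
  simp only [doubleRay, reverseOrient, Bool.not_eq_true', Bool.not_eq_false']
  constructor
  · rintro (⟨rfl, h⟩ | ⟨rfl, h⟩)
    · exact Or.inr ⟨by ring, by rwa [show -(u + 1) = -1 - u by ring]⟩
    · exact Or.inl ⟨by ring, by rwa [show -(v + 1) = -1 - v by ring] at *⟩
  · rintro (⟨h, h'⟩ | ⟨h, h'⟩)
    · exact Or.inr ⟨by omega, by rwa [show -1 - v = -u by omega]⟩
    · exact Or.inl ⟨by omega, by rwa [show -1 - u = -v by omega]⟩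

lemma doubleRay_adj_or (o : ℤ → Bool) (u : ℤ) :
    (doubleRay o).Adj u (u + 1) ∨ (doubleRay o).Adj (u + 1) u := by
  cases h : o u
  · exact Or.inr (Or.inr ⟨rfl, h⟩)
  · exact Or.inl (Or.inl ⟨rfl, h⟩)

lemma doubleRay_adj_add_iff (hε : ε = 1 ∨ ε = -1) {y : ℤ} :
    (doubleRay o).Adj y (y + ε) ↔ orientAlong o y ε 0 = true := by
  rcases hε with rfl | rfl <;> simp [doubleRay, orientAlong, ← sub_eq_add_neg] <;> omega

lemma doubleRay_adj_add_iff' (hε : ε = 1 ∨ ε = -1) {y : ℤ} :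
    (doubleRay o).Adj (y + ε) y ↔ orientAlong o y ε 0 = false := by
  rcases hε with rfl | rfl <;> simp [doubleRay, orientAlong, ← sub_eq_add_neg] <;> omega

lemma periodic_reverseOrient (h : Periodic o p) : Periodic (reverseOrient o) p :=
  fun z => by simp only [reverseOrient, show -1 - (z + p) = -1 - z - p by ring, h.sub_eq]

lemma periodic_orientAlong (h : Periodic o p) : Periodic (orientAlong o b ε) p :=
  fun t => by
    simp only [orientAlong, ← add_assoc, h _, show b - 1 - (t + p) = b - 1 - t - p by ring,
      h.sub_eq]

lemma not_periodic_of_isTurn {n d : ℤ} (hper : Periodic o p) (hturn : IsTurn o n)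
    (hd : p ∣ d - 1 ∨ p ∣ d + 1) : ¬Periodic o d := by
  intro hd'
  have h1 : Periodic o 1 := by
    rcases hd with ⟨k, hk⟩ | ⟨k, hk⟩
    · simpa [show d - k * p = 1 by linarith] using hd'.sub_period (hper.int_mul k)
    · simpa [show k * p - d = 1 by linarith] using (hper.int_mul k).sub_period hd'
  exact hturn (by simpa using (h1 (n - 1)).symm)

lemma orientAlong_one_ne_neg_one (hper : Periodic o p)
    (hab : (p ∣ a ∧ p ∣ b - 1) ∨ (p ∣ a - 1 ∧ p ∣ b)) :
    orientAlong o a 1 ≠ orientAlong o b (-1) := by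
  intro h
  have hrefl : ∀ z, o (a + z) = !o (b - 1 - z) := fun z => by
    simpa [orientAlong] using congrFun h z
  -- the reflection `a + z ↦ b - 1 - z` fixes the residue class of `a + z₀` and flips its arc
  obtain ⟨z₀, hz₀⟩ : ∃ z₀, p ∣ (a + z₀) - (b - 1 - z₀) := by
    rcases hab with ⟨⟨k, hk⟩, ⟨k', hk'⟩⟩ | ⟨⟨k, hk⟩, ⟨k', hk'⟩⟩
    · exact ⟨0, k - k', by linarith⟩
    · exact ⟨-1, k - k', by linarith⟩
  simpa [hper.eq_of_dvd_sub hz₀] using hrefl z₀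

lemma orientAlong_ne {n ε₁ ε₂ : ℤ} (hper : Periodic o p) (hturn : IsTurn o n)
    (hε₁ : ε₁ = 1 ∨ ε₁ = -1) (hε₂ : ε₂ = 1 ∨ ε₂ = -1)
    (hab : (p ∣ a ∧ p ∣ b - 1) ∨ (p ∣ a - 1 ∧ p ∣ b)) :
    orientAlong o a ε₁ ≠ orientAlong o b ε₂ := by
  have hshift : p ∣ (b - a) - 1 ∨ p ∣ (b - a) + 1 := by
    rcases hab with ⟨ha, hb⟩ | ⟨ha, hb⟩
    · exact Or.inl (by simpa [sub_sub, add_comm] using dvd_sub hb ha)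
    · exact Or.inr (by simpa [sub_add] using dvd_sub hb ha)
  intro h
  have key := congrFun h
  rcases hε₁ with rfl | rfl <;> rcases hε₂ with rfl | rfl
  · refine not_periodic_of_isTurn hper hturn hshift fun z => ?_
    simpa [orientAlong, show b + (z - a) = z + (b - a) by ring] using (key (z - a)).symm
  · exact orientAlong_one_ne_neg_one hper hab h
  · refine orientAlong_one_ne_neg_one hper ?_ h.symm
    rcases hab with ⟨ha, hb⟩ | ⟨ha, hb⟩
    exacts [Or.inr ⟨hb, ha⟩, Or.inl ⟨hb, ha⟩]
  · refine not_periodic_of_isTurn hper hturn hshift fun z => ?_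
    simpa [orientAlong, show b - 1 - (a - 1 - z) = z + (b - a) by ring] using
      (key (a - 1 - z)).symm

lemma exists_periodic_of_dRayPeriodic (h : DRayPeriodic o) : ∃ p : ℤ, 0 < p ∧ Periodic o p := by
  obtain ⟨f, hf, hmono, hne⟩ := h
  have hstep : ∀ u, f (u + 1) = f u + 1 ∧ o (f u) = o u := by
    intro u
    have hle : f u ≤ f (u + 1) := hmono (by omega)
    cases ho : o u
    · rcases hf _ _ (Or.inr ⟨rfl, ho⟩ : (doubleRay o).Adj (u + 1) u) with ⟨h, -⟩ | ⟨h, ho'⟩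
      · omega
      · exact ⟨h, ho'⟩
    · rcases hf _ _ (Or.inl ⟨rfl, ho⟩ : (doubleRay o).Adj u (u + 1)) with ⟨h, ho'⟩ | ⟨h, -⟩
      · exact ⟨h, ho'⟩
      · omega
  have hdisp : Periodic (fun u => f u - u) 1 := fun u => by simp only [(hstep u).1]; ring
  have hshift : ∀ u, f u = u + f 0 := fun u => by
    have := hdisp.int_mul_eq u
    simp only [Int.cast_id, mul_one] at this
    linarith
  have hper : Periodic o (f 0) := fun u => by rw [← hshift, (hstep u).2]
  have h0 : f 0 ≠ 0 := fun h0 => hne (funext fun u => by simp [hshift u, h0])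
  refine ⟨|f 0|, abs_pos.mpr h0, ?_⟩
  rcases abs_choice (f 0) with h | h <;> rw [h]
  exacts [hper, hper.neg]

end Orientation

section Host

variable {p x y z z' : ℤ} {α β l : ℕ × ℕ}

/-- Lane `(n, i)` is the `i`-th of the `n` lanes of group `n`. -/
def IsLane (l : ℕ × ℕ) : Prop := l.2 < l.1

/-- Lanes `α`, `β` of groups `α.1 < β.1` meet once: coordinate `meetOnLower p β` of `α` is glued
to coordinate `meetOnUpper p α` of `β`. These coordinates are `0` and `1` modulo `p`, and the
factor `6` keeps the meeting coordinates on a lane more than `2 * p` apart. -/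
def meetOnLower (p : ℤ) (β : ℕ × ℕ) : ℤ := 6 * p * Nat.pairEquiv β

def meetOnUpper (p : ℤ) (α : ℕ × ℕ) : ℤ := 1 - 6 * p * (Nat.pairEquiv α + 1)

def IsMeetCoord (p z : ℤ) : Prop := (∃ β, z = meetOnLower p β) ∨ ∃ α, z = meetOnUpper p α

/-- The vertex at coordinate `z` of lane `l`; a glued pair is represented by the vertex of the
lower lane. -/
noncomputable def laneVertex (p : ℤ) (l : ℕ × ℕ) (z : ℤ) : (ℕ × ℕ) × ℤ :=
  open Classical in
  if h : ∃ α : ℕ × ℕ, α.1 < l.1 ∧ z = meetOnUpper p α then (h.choose, meetOnLower p l) else (l, z)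

def host (o : ℤ → Bool) (p : ℤ) : Digraph ((ℕ × ℕ) × ℤ) where
  Adj w w' := ∃ l, IsLane l ∧ ∃ t t', (doubleRay o).Adj t t' ∧
    w = laneVertex p l t ∧ w' = laneVertex p l t'

lemma meetOnLower_injective (hp : 0 < p) : Injective (meetOnLower p) := fun β β' h =>
  Nat.pairEquiv.injective (by exact_mod_cast mul_left_cancel₀ (by positivity) h)

lemma meetOnUpper_injective (hp : 0 < p) : Injective (meetOnUpper p) := fun α α' h => by
  have : 6 * p * ((Nat.pairEquiv α : ℤ) + 1) = 6 * p * ((Nat.pairEquiv α' : ℤ) + 1) := by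
    unfold meetOnUpper at h; linarith
  exact Nat.pairEquiv.injective
    (by exact_mod_cast add_right_cancel (mul_left_cancel₀ (by positivity) this))

lemma meetOnLower_ne_meetOnUpper (hp : 0 < p) : meetOnLower p β ≠ meetOnUpper p α := by
  have : 0 ≤ 6 * p * (Nat.pairEquiv α : ℤ) := by positivity
  have : 0 ≤ 6 * p * (Nat.pairEquiv β : ℤ) := by positivity
  unfold meetOnLower meetOnUpper
  nlinarith

lemma IsMeetCoord.eq_of_abs_sub_le (hp : 0 < p) (hz : IsMeetCoord p z) (hz' : IsMeetCoord p z')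
    (h : |z - z'| ≤ 2 * p) : z = z' := by
  have hmul : ∀ k : ℕ, 0 ≤ 6 * p * k := fun k => by positivity
  rcases hz with ⟨β, rfl⟩ | ⟨α, rfl⟩ <;> rcases hz' with ⟨β', rfl⟩ | ⟨α', rfl⟩ <;>
    simp only [meetOnLower, meetOnUpper] at h ⊢
  · refine sub_eq_zero.mp (Int.eq_zero_of_abs_lt_dvd (m := 6 * p)
      ⟨(Nat.pairEquiv β : ℤ) - Nat.pairEquiv β', by ring⟩ (by linarith))
  · linarith [le_abs_self (6 * p * (Nat.pairEquiv β : ℤ) - (1 - 6 * p * (Nat.pairEquiv α' + 1))),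
      hmul (Nat.pairEquiv β), hmul (Nat.pairEquiv α')]
  · linarith [neg_abs_le (1 - 6 * p * (Nat.pairEquiv α + 1) - 6 * p * (Nat.pairEquiv β' : ℤ)),
      hmul (Nat.pairEquiv α), hmul (Nat.pairEquiv β')]
  · refine sub_eq_zero.mp (Int.eq_zero_of_abs_lt_dvd (m := 6 * p)
      ⟨(Nat.pairEquiv α' : ℤ) - Nat.pairEquiv α, by ring⟩ (by linarith))

lemma laneVertex_eq_or (p : ℤ) (l : ℕ × ℕ) (z : ℤ) : laneVertex p l z = (l, z) ∨
    ∃ α, α.1 < l.1 ∧ z = meetOnUpper p α ∧ laneVertex p l z = (α, meetOnLower p l) := by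
  unfold laneVertex
  split_ifs with h
  · exact Or.inr ⟨h.choose, h.choose_spec.1, h.choose_spec.2, rfl⟩
  · exact Or.inl rfl

lemma laneVertex_injective (p : ℤ) (l : ℕ × ℕ) : Injective (laneVertex p l) := by
  intro x y h
  rcases laneVertex_eq_or p l x with hx | ⟨α, hα, rfl, hx⟩ <;>
    rcases laneVertex_eq_or p l y with hy | ⟨α', hα', rfl, hy⟩ <;> rw [hx, hy] at h
  · exact (Prod.mk.inj h).2
  · exact absurd (Prod.mk.inj h).1 (by rintro rfl; omega)
  · exact absurd (Prod.mk.inj h).1 (by rintro rfl; omega)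
  · rw [(Prod.mk.inj h).1]

lemma laneVertex_eq_laneVertex (hp : 0 < p) (h : laneVertex p α x = laneVertex p β y)
    (hne : α ≠ β) :
    (β.1 < α.1 ∧ x = meetOnUpper p β ∧ y = meetOnLower p α) ∨
      (α.1 < β.1 ∧ x = meetOnLower p β ∧ y = meetOnUpper p α) := by
  rcases laneVertex_eq_or p α x with hx | ⟨γ, hγ, rfl, hx⟩ <;>
    rcases laneVertex_eq_or p β y with hy | ⟨δ, hδ, rfl, hy⟩ <;>
    rw [hx, hy, Prod.ext_iff] at h <;> dsimp only at h
  · exact absurd h.1 hne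
  · obtain ⟨rfl, rfl⟩ := h
    exact Or.inr ⟨hδ, rfl, rfl⟩
  · obtain ⟨rfl, rfl⟩ := h
    exact Or.inl ⟨hγ, rfl, rfl⟩
  · exact absurd (meetOnLower_injective hp h.2) hne

lemma isMeetCoord_of_laneVertex_eq (hp : 0 < p) (h : laneVertex p α x = laneVertex p β y)
    (hne : α ≠ β) : IsMeetCoord p x := by
  rcases laneVertex_eq_laneVertex hp h hne with ⟨-, hx, -⟩ | ⟨-, hx, -⟩
  exacts [Or.inr ⟨_, hx⟩, Or.inl ⟨_, hx⟩]

lemma dvd_of_laneVertex_eq (hp : 0 < p) (h : laneVertex p α x = laneVertex p β y)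
    (hne : α ≠ β) : (p ∣ x ∧ p ∣ y - 1) ∨ (p ∣ x - 1 ∧ p ∣ y) := by
  rcases laneVertex_eq_laneVertex hp h hne with ⟨-, rfl, rfl⟩ | ⟨-, rfl, rfl⟩
  · exact Or.inr ⟨⟨-(6 * (Nat.pairEquiv β + 1)), by unfold meetOnUpper; ring⟩,
      ⟨6 * Nat.pairEquiv α, by unfold meetOnLower; ring⟩⟩
  · exact Or.inl ⟨⟨6 * Nat.pairEquiv β, by unfold meetOnLower; ring⟩,
      ⟨-(6 * (Nat.pairEquiv α + 1)), by unfold meetOnUpper; ring⟩⟩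

lemma laneVertex_ne_of_fst_eq (hp : 0 < p) (hne : α ≠ β) (h : α.1 = β.1) :
    laneVertex p α x ≠ laneVertex p β y := fun he => by
  rcases laneVertex_eq_laneVertex hp he hne with ⟨hlt, -⟩ | ⟨hlt, -⟩ <;> omega

lemma laneVertex_meet (hp : 0 < p) (h : α.1 < β.1) :
    laneVertex p β (meetOnUpper p α) = laneVertex p α (meetOnLower p β) := by
  have hex : ∃ γ : ℕ × ℕ, γ.1 < β.1 ∧ meetOnUpper p α = meetOnUpper p γ := ⟨α, h, rfl⟩
  rcases laneVertex_eq_or p α (meetOnLower p β) with hα | ⟨γ, -, hγ, -⟩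
  · rw [hα, laneVertex, dif_pos hex, meetOnUpper_injective hp hex.choose_spec.2.symm]
  · exact absurd hγ (meetOnLower_ne_meetOnUpper hp)

end Host

section Copies

variable {o o' : ℤ → Bool} {p b u y ε : ℤ} {l : ℕ × ℕ}

def ArcOnLane (p : ℤ) (l : ℕ × ℕ) (w w' : (ℕ × ℕ) × ℤ) : Prop :=
  ∃ y ε, (ε = 1 ∨ ε = -1) ∧ w = laneVertex p l y ∧ w' = laneVertex p l (y + ε)

lemma ArcOnLane.symm {w w' : (ℕ × ℕ) × ℤ} (h : ArcOnLane p l w w') : ArcOnLane p l w' w := by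
  obtain ⟨y, ε, hε, rfl, rfl⟩ := h
  exact ⟨y + ε, -ε, by omega, rfl, by rw [add_neg_cancel_right]⟩

lemma exists_arcOnLane_of_host_adj {w w' : (ℕ × ℕ) × ℤ} (h : (host o p).Adj w w') :
    ∃ l, IsLane l ∧ ArcOnLane p l w w' := by
  obtain ⟨l, hl, t, t', hadj, rfl, rfl⟩ := h
  refine ⟨l, hl, t, t' - t, ?_, rfl, by rw [add_sub_cancel]⟩
  rcases hadj with ⟨rfl, -⟩ | ⟨rfl, -⟩ <;> omega

lemma doubleRay_adj_of_host_adj (hp : 0 < p) {y' : ℤ}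
    (h : (host o p).Adj (laneVertex p l y) (laneVertex p l y')) (hne : y ≠ y')
    (hclose : |y - y'| ≤ 2 * p) : (doubleRay o).Adj y y' := by
  obtain ⟨l', -, t, t', hadj, e, e'⟩ := h
  by_cases hl : l' = l
  · subst hl
    rwa [laneVertex_injective p l' e, laneVertex_injective p l' e']
  · exact absurd ((isMeetCoord_of_laneVertex_eq hp e (Ne.symm hl)).eq_of_abs_sub_le hp
      (isMeetCoord_of_laneVertex_eq hp e' (Ne.symm hl)) hclose) hne

def _root_.DCopy.reverse {W : Type} {D : Digraph W} (c : DCopy (doubleRay o) D) :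
    DCopy (doubleRay (reverseOrient o)) D where
  toFun u := c.toFun (-u)
  inj := c.inj.comp neg_injective
  adj _ _ h := c.adj _ _ (doubleRay_reverseOrient_adj.1 h)

variable (c : DCopy (doubleRay o') (host o p))

lemma exists_arcOnLane (u : ℤ) : ∃ l, IsLane l ∧ ArcOnLane p l (c.toFun u) (c.toFun (u + 1)) := by
  rcases doubleRay_adj_or o' u with h | h
  · exact exists_arcOnLane_of_host_adj (c.adj _ _ h)
  · obtain ⟨l, hl, harc⟩ := exists_arcOnLane_of_host_adj (c.adj _ _ h)
    exact ⟨l, hl, harc.symm⟩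

lemma toFun_add_one_add_one_of_not_isMeetCoord (hp : 0 < p) (hε : ε = 1 ∨ ε = -1)
    (h₀ : c.toFun u = laneVertex p l y) (h₁ : c.toFun (u + 1) = laneVertex p l (y + ε))
    (hy : ¬IsMeetCoord p (y + ε)) : c.toFun (u + 1 + 1) = laneVertex p l (y + ε + ε) := by
  obtain ⟨l', -, y', ε', hε', e₁, e₂⟩ := exists_arcOnLane c (u + 1)
  obtain rfl : l' = l := by
    by_contra hne
    exact hy (isMeetCoord_of_laneVertex_eq hp (h₁.symm.trans e₁) (Ne.symm hne))
  obtain rfl : y' = y + ε := laneVertex_injective p l' (e₁.symm.trans h₁)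
  rw [e₂]
  congr 1
  by_contra hne
  have : c.toFun (u + 1 + 1) = c.toFun u := by
    rw [e₂, h₀]
    congr 1
    omega
  have := c.inj this
  omega

lemma orient_eq_orientAlong (hp : 0 < p) (hε : ε = 1 ∨ ε = -1)
    (h₀ : c.toFun u = laneVertex p l y) (h₁ : c.toFun (u + 1) = laneVertex p l (y + ε)) :
    o' u = orientAlong o y ε 0 := by
  have hne : y ≠ y + ε := by omega
  have hclose : |y - (y + ε)| ≤ 2 * p := by
    rw [sub_add_cancel_left, abs_neg]
    rcases hε with rfl | rfl <;> simp <;> omega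
  cases ho : o' u
  · have := c.adj _ _ (Or.inr ⟨rfl, ho⟩ : (doubleRay o').Adj (u + 1) u)
    rw [h₀, h₁] at this
    refine ((doubleRay_adj_add_iff' hε).1 (doubleRay_adj_of_host_adj hp this hne.symm ?_)).symm
    rwa [abs_sub_comm]
  · have := c.adj _ _ (Or.inl ⟨rfl, ho⟩ : (doubleRay o').Adj u (u + 1))
    rw [h₀, h₁] at this
    exact ((doubleRay_adj_add_iff hε).1 (doubleRay_adj_of_host_adj hp this hne hclose)).symm

/-- Leaving a meeting point, the copy has to follow its lane for `p` steps, and by periodicity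
this agreement of orientations extends to all of `ℤ`. -/
lemma shift_eq_orientAlong (hp : 0 < p) (hper' : Periodic o' p) (hper : Periodic o p)
    (hε : ε = 1 ∨ ε = -1) (hb : IsMeetCoord p b) {m : ℤ}
    (h₀ : c.toFun m = laneVertex p l b) (h₁ : c.toFun (m + 1) = laneVertex p l (b + ε)) :
    (fun t => o' (m + t)) = orientAlong o b ε := by
  have hwalk : ∀ t : ℕ, (t : ℤ) < p → c.toFun (m + t) = laneVertex p l (b + ε * t) ∧
      c.toFun (m + t + 1) = laneVertex p l (b + ε * t + ε) := by
    intro t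
    induction t with
    | zero => intro _; simpa using ⟨h₀, h₁⟩
    | succ t ih =>
      intro ht
      push_cast at ht ⊢
      obtain ⟨e₀, e₁⟩ := ih (by linarith)
      have ht₀ : (0 : ℤ) ≤ t := Nat.cast_nonneg t
      have hfar : ¬IsMeetCoord p (b + ε * t + ε) := fun h => by
        have := h.eq_of_abs_sub_le hp hb
          (abs_le.mpr (by rcases hε with rfl | rfl <;> constructor <;> linarith))
        rcases hε with rfl | rfl <;> linarith
      rw [← add_assoc, show b + ε * (t + 1) = b + ε * t + ε by ring]
      exact ⟨e₁, toFun_add_one_add_one_of_not_isMeetCoord c hp hε e₀ e₁ hfar⟩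
  refine Periodic.eq_of_eqOn_Ico hp (hper'.const_add m) (periodic_orientAlong hper) fun t ht => ?_
  lift t to ℕ using ht.1
  obtain ⟨e₀, e₁⟩ := hwalk t ht.2
  rw [← orientAlong_add_mul hε]
  exact orient_eq_orientAlong c hp hε e₀ e₁

end Copies

section Classification

variable {o : ℤ → Bool} {p n u : ℤ} {l₁ l₂ : ℕ × ℕ} (c : DCopy (doubleRay o) (host o p))

lemma lane_eq_of_arcOnLane (hp : 0 < p) (hper : Periodic o p) (hturn : IsTurn o n)
    (h₁ : ArcOnLane p l₁ (c.toFun u) (c.toFun (u + 1)))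
    (h₂ : ArcOnLane p l₂ (c.toFun (u + 1)) (c.toFun (u + 1 + 1))) : l₁ = l₂ := by
  by_contra hne
  obtain ⟨y, ε₁, hε₁, e₀, e₁⟩ := h₁
  obtain ⟨b, ε₂, hε₂, e₂, e₃⟩ := h₂
  have hmeet : laneVertex p l₁ (y + ε₁) = laneVertex p l₂ b := e₁.symm.trans e₂
  have hfwd := shift_eq_orientAlong c hp hper hper hε₂
    (isMeetCoord_of_laneVertex_eq hp hmeet.symm (Ne.symm hne)) e₂ e₃
  have hbwd := shift_eq_orientAlong c.reverse hp (periodic_reverseOrient hper) hper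
    (by omega : -ε₁ = 1 ∨ -ε₁ = -1) (isMeetCoord_of_laneVertex_eq hp hmeet hne) (m := -(u + 1))
    (by simpa [DCopy.reverse] using e₁)
    (by simpa [DCopy.reverse, show -(-(u + 1) + 1) = u by ring] using e₀)
  rw [reverseOrient_shift, orientAlong_neg hε₁] at hbwd
  exact orientAlong_ne hper hturn hε₁ hε₂ (dvd_of_laneVertex_eq hp hmeet hne)
    ((reverseOrient_involutive.injective hbwd).symm.trans hfwd)

lemma exists_lane_range_subset (hp : 0 < p) (hper : Periodic o p) (hturn : IsTurn o n) :
    ∃ l, IsLane l ∧ Set.range (laneVertex p l) ⊆ Set.range c.toFun := by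
  choose L hL hArc using exists_arcOnLane c
  have hL1 : Periodic L 1 := fun u =>
    (lane_eq_of_arcOnLane c hp hper hturn (hArc u) (hArc (u + 1))).symm
  have hconst : ∀ u, L u = L 0 := fun u => by simpa using hL1.int_mul_eq u
  choose y ε hε e₀ e₁ using fun u => hconst u ▸ hArc u
  have hy : Surjective y := by
    refine Int.surjective_of_injective_of_step (fun a b h => c.inj (by rw [e₀, e₀, h])) fun u => ?_
    have := laneVertex_injective p _ ((e₀ (u + 1)).symm.trans (e₁ u))
    rcases hε u with h | h <;> omega
  refine ⟨L 0, hL 0, ?_⟩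
  rintro _ ⟨z, rfl⟩
  obtain ⟨u, rfl⟩ := hy z
  exact ⟨u, e₀ u⟩

end Classification

noncomputable def laneCopy (o : ℤ → Bool) (p : ℤ) {l : ℕ × ℕ} (hl : IsLane l) :
    DCopy (doubleRay o) (host o p) where
  toFun := laneVertex p l
  inj := laneVertex_injective p l
  adj t t' h := ⟨l, hl, t, t', h, rfl, rfl⟩

variable {o : ℤ → Bool} {p : ℤ}

lemma host_manyDisjointCopies (hp : 0 < p) : ManyDisjointCopies (doubleRay o) (host o p) :=
  fun k => ⟨fun i => laneCopy o p (l := (k, i)) i.isLt, fun _ _ hij _ _ =>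
    laneVertex_ne_of_fst_eq hp (fun h => hij (Fin.ext (congrArg Prod.snd h))) rfl⟩

lemma host_not_infDisjointCopies {n : ℤ} (hp : 0 < p) (hper : Periodic o p)
    (hturn : IsTurn o n) : ¬InfDisjointCopies (doubleRay o) (host o p) := by
  rintro ⟨c, hdisj⟩
  choose L hL hrange using fun i => exists_lane_range_subset (c i) hp hper hturn
  -- copies on lanes of different groups would share the vertex where these lanes meet
  have hgroup : ∀ i j, i ≠ j → ¬(L i).1 < (L j).1 := fun i j hij hlt => by
    obtain ⟨u, hu⟩ := hrange i (Set.mem_range_self (meetOnLower p (L j)))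
    obtain ⟨v, hv⟩ := hrange j (Set.mem_range_self (meetOnUpper p (L i)))
    exact hdisj i j hij u v (by rw [hu, hv, laneVertex_meet hp hlt])
  have hgroup₀ : ∀ i, (L i).1 = (L 0).1 := fun i => by
    rcases eq_or_ne i 0 with rfl | hi
    · rfl
    · exact le_antisymm (not_lt.1 (hgroup 0 i hi.symm)) (not_lt.1 (hgroup i 0 hi))
  refine not_injective_infinite_finite
    (fun i => (⟨(L i).2, lt_of_lt_of_eq (hL i) (hgroup₀ i)⟩ : Fin (L 0).1)) fun i j h => ?_
  by_contra hij
  obtain ⟨u, hu⟩ := hrange i (Set.mem_range_self 0)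
  obtain ⟨v, hv⟩ := hrange j (Set.mem_range_self 0)
  refine hdisj i j hij u v ?_
  rw [hu, hv, Prod.ext ((hgroup₀ i).trans (hgroup₀ j).symm) (congrArg Fin.val h)]

end DoubleRayNonUbiquity

open DoubleRayNonUbiquity

/-- every periodic oriented double ray with infinitely many turns
is non-ubiquitous. -/
theorem periodic_infinite_turns_not_ubiquitous (o : ℤ → Bool)
    (hinf : {n : ℤ | IsTurn o n}.Infinite)
    (hp : DRayPeriodic o) :
    ¬ Ubiquitous (doubleRay o) := by
  obtain ⟨p, hp₀, hper⟩ := exists_periodic_of_dRayPeriodic hp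
  obtain ⟨n, hturn⟩ := hinf.nonempty
  exact fun hU => host_not_infDisjointCopies hp₀ hper hturn (hU _ _ (host_manyDisjointCopies hp₀))
end
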